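/- arXiv:2102.07171 — 4 statements merged into one kernel-verified Lean document; each statement's English description precedes it below -/
import Mathlib

section
/- Let ζ ∈ (0,1) be such that 1/(2ζ) is a positive integer, let X be a set, and let C be a class of functions from X to [0,1] with sfat_{2ζ}(C) = d finite. Then there exists a deterministic online learner L over domain X with feedback alphabet [0,1] such that: for every target concept c ∈ C, every T ∈ ℕ, every sequence of points x_1,…,x_T ∈ X, and every feedback sequence a_1,…,a_T ∈ [0,1] satisfying |a_t − c(x_t)| ≤ ζ for all t ∈ [T], the predictions ŷ_t := L((x_1,a_1),…,(x_{t−1},a_{t−1}); x_t) satisfy: the number of rounds t ∈ [T] with |ŷ_t − c(x_t)| > 5ζ is at most d. -/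
/-!
The learner keeps the version space `V` of concepts `ζ`-consistent with the feedback so far and
uses the depth `r` of the deepest `2ζ`-tree for `V` as a potential. At a point `x`, the grid
points `(2j+1)ζ` cut `V` into buckets of concepts with `f x` within `2ζ` of a grid point; a
bucket is heavy if it still carries a tree of depth `r`. Two heavy buckets whose grid points are
`8ζ` apart would be the two subtrees, under a root `x` with threshold halfway between them, of
a tree of depth `r + 1`, so the heavy grid points span at most `6ζ` and the learner predicts their
midpoint. The feedback lies within `ζ` of a grid point whose bucket contains the next version
space: if that bucket is heavy the prediction is within `3ζ + ζ + ζ = 5ζ` of the target,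
otherwise `r` drops. Since `r ≤ d`, at most `d` mistakes occur.
-/

def HasSfatTree {X : Type*} (C : Set (X → ℝ)) (ε : ℝ) (k : ℕ) : Prop :=
  ∃ (pt : List Bool → X) (th : List Bool → ℝ),
    (∀ w : List Bool, w.length < k → th w ∈ Set.Icc (0 : ℝ) 1) ∧
    ∀ v : Fin k → Bool, ∃ f ∈ C, ∀ i : Fin k,
      (v i = true →
        th ((List.ofFn v).take i.1) + ε ≤ f (pt ((List.ofFn v).take i.1))) ∧
      (v i = false →
        f (pt ((List.ofFn v).take i.1)) ≤ th ((List.ofFn v).take i.1) - ε)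

section SfatTree

variable {X : Type*}

theorem HasSfatTree.mono {V W : Set (X → ℝ)} {ε : ℝ} {k : ℕ} (hVW : V ⊆ W)
    (hV : HasSfatTree V ε k) : HasSfatTree W ε k := by
  obtain ⟨pt, th, hth, hV⟩ := hV
  exact ⟨pt, th, hth, fun v => (hV v).imp fun f hf => ⟨hVW hf.1, hf.2⟩⟩

theorem HasSfatTree.mono_depth {C : Set (X → ℝ)} {ε : ℝ} {j k : ℕ} (hjk : j ≤ k)
    (hC : HasSfatTree C ε k) : HasSfatTree C ε j := by
  obtain ⟨pt, th, hth, hC⟩ := hC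
  refine ⟨pt, th, fun w hw => hth w (hw.trans_le hjk), fun v => ?_⟩
  let v' : Fin k → Bool := fun i => if hi : i.1 < j then v ⟨i, hi⟩ else false
  have hv : List.ofFn v = (List.ofFn v').take j := by
    rw [← Fin.ofFn_take_eq_take_ofFn hjk]
    congr 1
    funext i
    simp [v', Fin.take]
  obtain ⟨f, hf, hfv⟩ := hC v'
  refine ⟨f, hf, fun i => ?_⟩
  have hprefix : (List.ofFn v).take i = (List.ofFn v').take i := by
    rw [hv, List.take_take, min_eq_left i.2.le]
  have hvi : v' (Fin.castLE hjk i) = v i := by simp [v']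
  rw [hprefix, ← hvi]
  exact hfv (Fin.castLE hjk i)

theorem hasSfatTree_zero {V : Set (X → ℝ)} (x : X) (ε : ℝ) (hV : V.Nonempty) :
    HasSfatTree V ε 0 := by
  obtain ⟨f, hf⟩ := hV
  exact ⟨fun _ => x, fun _ => 0, fun _ hw => absurd hw (Nat.not_lt_zero _),
    fun _ => ⟨f, hf, fun i => i.elim0⟩⟩

theorem HasSfatTree.node {V : Set (X → ℝ)} {ε θ : ℝ} {k : ℕ} (x : X)
    (hθ : θ ∈ Set.Icc (0 : ℝ) 1)
    (h₀ : HasSfatTree {f ∈ V | f x ≤ θ - ε} ε k) (h₁ : HasSfatTree {f ∈ V | θ + ε ≤ f x} ε k) :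
    HasSfatTree V ε (k + 1) := by
  have h : ∀ b : Bool, HasSfatTree {f ∈ V | cond b (θ + ε ≤ f x) (f x ≤ θ - ε)} ε k :=
    fun b => Bool.rec h₀ h₁ b
  choose pt th hth hs using h
  refine ⟨(fun | [] => x | b :: w => pt b w), (fun | [] => θ | b :: w => th b w), ?_,
    fun v => ?_⟩
  · rintro (_ | ⟨b, w⟩) hw
    · exact hθ
    · exact hth b w (Nat.lt_of_succ_lt_succ hw)
  obtain ⟨f, ⟨hfV, hroot⟩, hf⟩ := hs (v 0) (Fin.tail v)
  refine ⟨f, hfV, Fin.cases ?_ fun i => ?_⟩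
  · cases hv : v 0 <;> simp_all
  · have hprefix : (List.ofFn v).take (i.1 + 1) = v 0 :: (List.ofFn (Fin.tail v)).take i :=
      by rw [List.ofFn_succ, List.take_succ_cons]; rfl
    simp only [Fin.val_succ, hprefix]
    exact hf i

end SfatTree

section SfatRank

variable {X : Type*}

open Classical

/-- The sequential fat-shattering dimension of `V`, capped at `d` (beyond which it may be
infinite). -/
noncomputable def sfatRank (V : Set (X → ℝ)) (ε : ℝ) (d : ℕ) : ℕ :=
  Nat.findGreatest (HasSfatTree V ε) d

variable {V W : Set (X → ℝ)} {ε : ℝ} {d : ℕ}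

theorem sfatRank_le : sfatRank V ε d ≤ d :=
  Nat.findGreatest_le d

theorem sfatRank_mono (hVW : V ⊆ W) : sfatRank V ε d ≤ sfatRank W ε d :=
  Nat.findGreatest_mono (fun _ => HasSfatTree.mono hVW) le_rfl

theorem hasSfatTree_sfatRank (x : X) (hV : V.Nonempty) : HasSfatTree V ε (sfatRank V ε d) :=
  Nat.findGreatest_spec (Nat.zero_le d) (hasSfatTree_zero x ε hV)

theorem sfatRank_lt_of_not_hasSfatTree {k : ℕ} (x : X) (hV : V.Nonempty)
    (hk : ¬HasSfatTree V ε k) : sfatRank V ε d < k :=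
  lt_of_not_ge fun hle => hk ((hasSfatTree_sfatRank x hV).mono_depth hle)

theorem not_hasSfatTree_sfatRank_succ {C : Set (X → ℝ)} (hVC : V ⊆ C)
    (hC : ¬HasSfatTree C ε (d + 1)) : ¬HasSfatTree V ε (sfatRank V ε d + 1) := by
  intro hV
  rcases (sfatRank_le (V := V) (ε := ε) (d := d)).lt_or_eq with hlt | heq
  · exact Nat.findGreatest_is_greatest (Nat.lt_succ_self _) hlt hV
  · exact hC (heq ▸ hV.mono hVC)

end SfatRank

section Grid

def gridPoint (ζ : ℝ) (j : ℕ) : ℝ := (2 * j + 1) * ζ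

variable {ζ : ℝ} {m : ℕ}

theorem gridPoint_add (i k : ℕ) : gridPoint ζ (i + k) = gridPoint ζ i + 2 * k * ζ := by
  simp only [gridPoint]
  push_cast
  ring

theorem gridPoint_mono (hζ : 0 ≤ ζ) : Monotone (gridPoint ζ) := fun i j hij => by
  obtain ⟨k, rfl⟩ := Nat.exists_eq_add_of_le hij
  rw [gridPoint_add]
  have : 0 ≤ 2 * (k : ℝ) * ζ := by positivity
  linarith

theorem gridPoint_mem_Icc (hζ : 0 ≤ ζ) (hm : (m : ℝ) * (2 * ζ) = 1) {j : ℕ} (hj : j < m) :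
    gridPoint ζ j ∈ Set.Icc (0 : ℝ) 1 := by
  have hjm : (j : ℝ) + 1 ≤ m := by exact_mod_cast hj
  constructor
  · unfold gridPoint; positivity
  · unfold gridPoint; nlinarith

theorem exists_gridPoint_near (hζ : 0 < ζ) (hm : (m : ℝ) * (2 * ζ) = 1) {b : ℝ}
    (hb : b ∈ Set.Icc (0 : ℝ) 1) : ∃ j < m, |b - gridPoint ζ j| ≤ ζ := by
  have hm0 : 0 < m := by
    rcases Nat.eq_zero_or_pos m with rfl | h
    · simp at hm
    · exact h
  suffices ∃ j < m, (j : ℝ) ≤ b * m ∧ b * m ≤ j + 1 by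
    obtain ⟨j, hj, hlo, hhi⟩ := this
    have hscale : b - gridPoint ζ j = (b * m - j - 1 / 2) * (2 * ζ) := by
      unfold gridPoint; linear_combination (-b) * hm
    have hmid : |b * m - j - 1 / 2| ≤ 1 / 2 := abs_le.mpr ⟨by linarith, by linarith⟩
    refine ⟨j, hj, ?_⟩
    rw [hscale, abs_mul, abs_of_pos (by positivity : 0 < 2 * ζ)]
    nlinarith
  rcases hb.2.lt_or_eq with hb1 | rfl
  · have hbm : b * m < m := by nlinarith [(Nat.cast_pos.mpr hm0 : (0 : ℝ) < m)]
    refine ⟨⌊b * m⌋₊, (Nat.floor_lt (by nlinarith [hb.1])).mpr hbm, Nat.floor_le ?_,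
      (Nat.lt_floor_add_one _).le⟩
    exact mul_nonneg hb.1 (Nat.cast_nonneg m)
  · exact ⟨m - 1, Nat.sub_lt hm0 one_pos, by simp [Nat.cast_pred hm0],
      by simp [Nat.cast_pred hm0]⟩

end Grid

section Learner

variable {X : Type*}

open Classical

def versionSpace (C : Set (X → ℝ)) (ζ : ℝ) (h : List (X × ℝ)) : Set (X → ℝ) :=
  {f ∈ C | ∀ p ∈ h, |f p.1 - p.2| ≤ ζ}

def bucket (V : Set (X → ℝ)) (ζ : ℝ) (x : X) (j : ℕ) : Set (X → ℝ) :=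
  {f ∈ V | |f x - gridPoint ζ j| ≤ 2 * ζ}

noncomputable def heavyBuckets (V : Set (X → ℝ)) (ζ : ℝ) (d m : ℕ) (x : X) : Finset ℕ :=
  (Finset.range m).filter fun j => HasSfatTree (bucket V ζ x j) (2 * ζ) (sfatRank V (2 * ζ) d)

noncomputable def predict (V : Set (X → ℝ)) (ζ : ℝ) (d m : ℕ) (x : X) : ℝ :=
  if hS : (heavyBuckets V ζ d m x).Nonempty then
    (gridPoint ζ ((heavyBuckets V ζ d m x).min' hS) +
      gridPoint ζ ((heavyBuckets V ζ d m x).max' hS)) / 2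
  else 1 / 2

variable {C V W : Set (X → ℝ)} {ζ : ℝ} {d m : ℕ} {x : X}

theorem versionSpace_subset (h : List (X × ℝ)) : versionSpace C ζ h ⊆ C :=
  fun _ hf => hf.1

theorem mem_versionSpace_concat {f : X → ℝ} {h : List (X × ℝ)} {p : X × ℝ} :
    f ∈ versionSpace C ζ (h ++ [p]) ↔ f ∈ versionSpace C ζ h ∧ |f p.1 - p.2| ≤ ζ := by
  simp only [versionSpace, Set.mem_ofPred_eq, List.mem_append, List.mem_singleton,
    or_imp, forall_and, forall_eq, and_assoc]

theorem versionSpace_concat_subset (h : List (X × ℝ)) (p : X × ℝ) :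
    versionSpace C ζ (h ++ [p]) ⊆ versionSpace C ζ h :=
  fun _ hf => (mem_versionSpace_concat.mp hf).1

theorem lt_of_mem_heavyBuckets {j : ℕ} (hj : j ∈ heavyBuckets V ζ d m x) : j < m :=
  Finset.mem_range.mp (Finset.mem_filter.mp hj).1

theorem predict_mem_Icc (hζ : 0 ≤ ζ) (hm : (m : ℝ) * (2 * ζ) = 1) :
    predict V ζ d m x ∈ Set.Icc (0 : ℝ) 1 := by
  unfold predict
  split_ifs with hS
  · have hmin := gridPoint_mem_Icc hζ hm (lt_of_mem_heavyBuckets (Finset.min'_mem _ hS))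
    have hmax := gridPoint_mem_Icc hζ hm (lt_of_mem_heavyBuckets (Finset.max'_mem _ hS))
    constructor <;> linarith [hmin.1, hmin.2, hmax.1, hmax.2]
  · norm_num

/-- Two heavy buckets `8ζ` apart would be the two sides of a tree of depth `sfatRank V + 1`. -/
theorem le_add_three_of_mem_heavyBuckets (hζ : 0 ≤ ζ) (hm : (m : ℝ) * (2 * ζ) = 1)
    (hV : ¬HasSfatTree V (2 * ζ) (sfatRank V (2 * ζ) d + 1)) {i j : ℕ}
    (hi : i ∈ heavyBuckets V ζ d m x) (hj : j ∈ heavyBuckets V ζ d m x) : j ≤ i + 3 := by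
  by_contra! hij
  obtain ⟨k, rfl⟩ : ∃ k, j = i + (4 + k) := ⟨j - (i + 4), by omega⟩
  set θ := (gridPoint ζ i + gridPoint ζ (i + (4 + k))) / 2 with hθ_def
  have hgap : gridPoint ζ (i + (4 + k)) = gridPoint ζ i + 2 * ((4 : ℝ) + k) * ζ := by
    rw [gridPoint_add]
    push_cast
    ring
  have hk : 0 ≤ (k : ℝ) * ζ := by positivity
  have hθ : θ ∈ Set.Icc (0 : ℝ) 1 := by
    have hi' := gridPoint_mem_Icc hζ hm (lt_of_mem_heavyBuckets hi)
    have hj' := gridPoint_mem_Icc hζ hm (lt_of_mem_heavyBuckets hj)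
    constructor <;> linarith [hi'.1, hi'.2, hj'.1, hj'.2]
  have h₀ : bucket V ζ x i ⊆ {f ∈ V | f x ≤ θ - 2 * ζ} := fun f hf =>
    ⟨hf.1, by linarith [(abs_le.mp hf.2).2]⟩
  have h₁ : bucket V ζ x (i + (4 + k)) ⊆ {f ∈ V | θ + 2 * ζ ≤ f x} := fun f hf =>
    ⟨hf.1, by linarith [(abs_le.mp hf.2).1]⟩
  exact hV <| HasSfatTree.node x hθ ((Finset.mem_filter.mp hi).2.mono h₀)
    ((Finset.mem_filter.mp hj).2.mono h₁)

theorem abs_predict_sub_gridPoint_le (hζ : 0 ≤ ζ) (hm : (m : ℝ) * (2 * ζ) = 1)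
    (hV : ¬HasSfatTree V (2 * ζ) (sfatRank V (2 * ζ) d + 1)) {j : ℕ}
    (hj : j ∈ heavyBuckets V ζ d m x) : |predict V ζ d m x - gridPoint ζ j| ≤ 3 * ζ := by
  have hS : (heavyBuckets V ζ d m x).Nonempty := ⟨j, hj⟩
  set S := heavyBuckets V ζ d m x
  have hmin : gridPoint ζ (S.min' hS) ≤ gridPoint ζ j := gridPoint_mono hζ (S.min'_le j hj)
  have hmax : gridPoint ζ j ≤ gridPoint ζ (S.max' hS) := gridPoint_mono hζ (S.le_max' j hj)
  have hspread : gridPoint ζ (S.max' hS) ≤ gridPoint ζ (S.min' hS) + 6 * ζ := by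
    have := gridPoint_mono hζ <|
      le_add_three_of_mem_heavyBuckets hζ hm hV (S.min'_mem hS) (S.max'_mem hS)
    rw [gridPoint_add] at this
    push_cast at this
    linarith
  rw [predict, dif_pos hS, abs_le]
  constructor <;> linarith

theorem sfatRank_lt_of_subset_bucket (hW : W.Nonempty) {j : ℕ} (hWj : W ⊆ bucket V ζ x j)
    (hjm : j < m) (hjS : j ∉ heavyBuckets V ζ d m x) :
    sfatRank W (2 * ζ) d < sfatRank V (2 * ζ) d :=
  sfatRank_lt_of_not_hasSfatTree x hW fun hWtree =>
    hjS (Finset.mem_filter.mpr ⟨Finset.mem_range.mpr hjm, hWtree.mono hWj⟩)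

end Learner

theorem sfatRank_versionSpace_concat_lt {X : Type*} {C : Set (X → ℝ)} {ζ : ℝ} {d m : ℕ}
    (hζ : 0 < ζ) (hm : (m : ℝ) * (2 * ζ) = 1) (hC : ¬HasSfatTree C (2 * ζ) (d + 1))
    {h : List (X × ℝ)} {x : X} {a : ℝ} (ha : a ∈ Set.Icc (0 : ℝ) 1) {c : X → ℝ}
    (hc : c ∈ versionSpace C ζ (h ++ [(x, a)]))
    (hmistake : 5 * ζ < |predict (versionSpace C ζ h) ζ d m x - c x|) :
    sfatRank (versionSpace C ζ (h ++ [(x, a)])) (2 * ζ) d <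
      sfatRank (versionSpace C ζ h) (2 * ζ) d := by
  obtain ⟨j, hjm, hja⟩ := exists_gridPoint_near hζ hm ha
  have hbucket : versionSpace C ζ (h ++ [(x, a)]) ⊆ bucket (versionSpace C ζ h) ζ x j :=
    fun f hf => by
      obtain ⟨hfh, hfa⟩ := mem_versionSpace_concat.mp hf
      exact ⟨hfh, (abs_sub_le _ a _).trans (by linarith)⟩
  refine sfatRank_lt_of_subset_bucket ⟨c, hc⟩ hbucket hjm fun hj => hmistake.not_ge ?_
  have hca : |c x - a| ≤ ζ := (mem_versionSpace_concat.mp hc).2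
  have hpred := abs_predict_sub_gridPoint_le hζ.le hm
    (not_hasSfatTree_sfatRank_succ (versionSpace_subset h) hC) hj
  calc |predict (versionSpace C ζ h) ζ d m x - c x|
      ≤ |predict (versionSpace C ζ h) ζ d m x - gridPoint ζ j| + |gridPoint ζ j - c x| :=
        abs_sub_le _ _ _
    _ ≤ |predict (versionSpace C ζ h) ζ d m x - gridPoint ζ j| +
          (|gridPoint ζ j - a| + |a - c x|) := by gcongr; exact abs_sub_le _ _ _
    _ ≤ 3 * ζ + (ζ + ζ) := by
        gcongr
        · rwa [abs_sub_comm]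
        · rwa [abs_sub_comm]
    _ = 5 * ζ := by ring

theorem Nat.count_add_le_of_le_of_lt {P : ℕ → Prop} [DecidablePred P] {r : ℕ → ℕ} {T : ℕ}
    (hle : ∀ t < T, r (t + 1) ≤ r t) (hlt : ∀ t < T, P t → r (t + 1) < r t) :
    Nat.count P T + r T ≤ r 0 := by
  induction T with
  | zero => simp
  | succ T ih =>
    have := ih (fun t ht => hle t (by omega)) (fun t ht => hlt t (by omega))
    rw [Nat.count_succ]
    split_ifs with hP
    · have := hlt T T.lt_succ_self hP; omega
    · have := hle T T.lt_succ_self; omega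

theorem Nat.card_fin_subtype_eq_count (P : ℕ → Prop) [DecidablePred P] (T : ℕ) :
    Nat.card {t : Fin T // P t.1} = Nat.count P T := by
  rw [Nat.count_eq_card_filter_range, ← Nat.card_eq_finsetCard]
  refine Nat.card_congr ⟨fun t => ⟨t.1, by simp [t.1.2, t.2]⟩, fun k => ⟨⟨k.1, ?_⟩, ?_⟩,
    fun _ => rfl, fun _ => rfl⟩
  · exact Finset.mem_range.mp (Finset.mem_filter.mp k.2).1
  · exact (Finset.mem_filter.mp k.2).2

theorem stmt1_general {X : Type*} (ζ : ℝ) (hζ : 0 < ζ ∧ ζ < 1)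
    (hζint : ∃ m : ℕ, 0 < m ∧ (m : ℝ) = 1 / (2 * ζ))
    (C : Set (X → ℝ))
    (d : ℕ) (hd : HasSfatTree C (2 * ζ) d ∧ ¬ HasSfatTree C (2 * ζ) (d + 1)) :
    ∃ L : List (X × ℝ) → X → ℝ,
      (∀ h x, L h x ∈ Set.Icc (0 : ℝ) 1) ∧
      ∀ c ∈ C, ∀ T : ℕ, ∀ x : ℕ → X, ∀ a : ℕ → ℝ,
        (∀ t < T, a t ∈ Set.Icc (0 : ℝ) 1 ∧ |a t - c (x t)| ≤ ζ) →
        Nat.card {t : Fin T //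
          5 * ζ < |L ((List.range t.1).map fun j => (x j, a j)) (x t.1) - c (x t.1)|} ≤ d := by
  classical
  obtain ⟨m, -, hmζ⟩ := hζint
  have hm : (m : ℝ) * (2 * ζ) = 1 := by rw [hmζ]; field_simp [hζ.1.ne']
  refine ⟨fun h => predict (versionSpace C ζ h) ζ d m, fun _ _ => predict_mem_Icc hζ.1.le hm, ?_⟩
  intro c hc T x a hfeed
  set hist : ℕ → List (X × ℝ) := fun t => (List.range t).map fun j => (x j, a j)
  have hist_succ (t : ℕ) : hist (t + 1) = hist t ++ [(x t, a t)] := by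
    simp [hist, List.range_succ]
  have hc_mem (t : ℕ) (ht : t ≤ T) : c ∈ versionSpace C ζ (hist t) := by
    refine ⟨hc, fun p hp => ?_⟩
    obtain ⟨j, hj, rfl⟩ := List.mem_map.mp hp
    rw [abs_sub_comm]
    exact (hfeed j ((List.mem_range.mp hj).trans_le ht)).2
  set V : ℕ → Set (X → ℝ) := fun t => versionSpace C ζ (hist t)
  have hV_succ (t : ℕ) : V (t + 1) = versionSpace C ζ (hist t ++ [(x t, a t)]) := by
    simp only [V, hist_succ]
  set mistake : ℕ → Prop := fun t => 5 * ζ < |predict (V t) ζ d m (x t) - c (x t)|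
  calc Nat.card _ = Nat.count mistake T := Nat.card_fin_subtype_eq_count _ T
    _ ≤ Nat.count mistake T + sfatRank (V T) (2 * ζ) d := Nat.le_add_right _ _
    _ ≤ sfatRank (V 0) (2 * ζ) d := by
        refine Nat.count_add_le_of_le_of_lt (P := mistake)
          (r := fun t => sfatRank (V t) (2 * ζ) d) (fun t _ => ?_) (fun t ht hmistake => ?_) <;>
          simp only [hV_succ]
        · exact sfatRank_mono (versionSpace_concat_subset _ _)
        · exact sfatRank_versionSpace_concat_lt hζ.1 hm hd.2 (hfeed t ht).1
            (hV_succ t ▸ hc_mem (t + 1) ht) hmistake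
    _ ≤ d := sfatRank_le

/-- if `sfat_{2ζ}(C) = d` is finite, there is a deterministic
online learner (a function from histories `(x₁,a₁),…,(x_{t-1},a_{t-1})` and a
current point `x_t` to a prediction in `[0,1]`) which, on any sequence of
points and any `ζ`-accurate feedback sequence for a target `c ∈ C`, makes at
most `d` many `5ζ`-mistakes. -/
theorem stmt1 {X : Type*} (ζ : ℝ) (hζ : 0 < ζ ∧ ζ < 1)
    (hζint : ∃ m : ℕ, 0 < m ∧ (m : ℝ) = 1 / (2 * ζ))
    (C : Set (X → ℝ)) (hC : ∀ f ∈ C, ∀ x : X, f x ∈ Set.Icc (0 : ℝ) 1)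
    (d : ℕ) (hd : HasSfatTree C (2 * ζ) d ∧ ¬ HasSfatTree C (2 * ζ) (d + 1)) :
    ∃ L : List (X × ℝ) → X → ℝ,
      (∀ h x, L h x ∈ Set.Icc (0 : ℝ) 1) ∧
      ∀ c ∈ C, ∀ T : ℕ, ∀ x : ℕ → X, ∀ a : ℕ → ℝ,
        (∀ t < T, a t ∈ Set.Icc (0 : ℝ) 1 ∧ |a t - c (x t)| ≤ ζ) →
        Nat.card {t : Fin T //
          5 * ζ < |L ((List.range t.1).map fun j => (x j, a j)) (x t.1) - c (x t.1)|} ≤ d :=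
  stmt1_general ζ hζ hζint C d hd
end

section
/- Let ζ > 0, let X be a set, let C be a class of functions from X to [0,1], and let k be a natural number such that C admits a ζ-sequential fat-shattering tree of depth k. Then for every deterministic online learner L over domain X with feedback alphabet {0,1}, there exist points x_1,…,x_k ∈ X, feedback bits s_1,…,s_k ∈ {0,1}, and a concept c ∈ C such that, setting ŷ_t := L((x_1,s_1),…,(x_{t−1},s_{t−1}); x_t) for each t ∈ [k], one has c(x_t) ≥ ŷ_t + ζ whenever s_t = 1 and c(x_t) ≤ ŷ_t − ζ whenever s_t = 0. In particular |ŷ_t − c(x_t)| ≥ ζ for all t ∈ [k], so every online learner for C can be forced (by an adversary providing only binary directional feedback) to make at least sfat_ζ(C) many ζ-mistakes. -/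
theorem List.take_ofFn_eq_map_range {α : Type*} (s : ℕ → α) {k t : ℕ} (ht : t ≤ k) :
    (List.ofFn fun i : Fin k => s i).take t = (List.range t).map s := by
  have hofFn : (List.ofFn fun i : Fin k => s i) = (List.range k).map s := by
    rw [List.ofFn_eq_map, ← List.map_coe_finRange_eq_range, List.map_map]; rfl
  rw [hofFn, ← List.map_take, List.take_range, min_eq_left ht]

def transcript {α : Type*} (next : List α → α) : ℕ → List α
  | 0 => []
  | n + 1 => transcript next n ++ [next (transcript next n)]

theorem transcript_eq_map_range {α : Type*} (next : List α → α) (n : ℕ) :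
    transcript next n = (List.range n).map fun i => next (transcript next i) := by
  induction n with
  | zero => rfl
  | succ n ih => rw [transcript, List.range_succ, List.map_append, ← ih]; rfl

noncomputable def sfatAdversary {X : Type*} (L : List (X × Bool) → X → ℝ)
    (pt : List Bool → X) (th : List Bool → ℝ) (h : List (X × Bool)) : X × Bool :=
  let w := h.map Prod.snd
  (pt w, decide (L h (pt w) ≤ th w))

theorem margin_of_threshold_margin {ŷ a y ζ : ℝ}
    (h : (decide (ŷ ≤ a) = true → a + ζ ≤ y) ∧ (decide (ŷ ≤ a) = false → y ≤ a - ζ)) :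
    (decide (ŷ ≤ a) = true → ŷ + ζ ≤ y) ∧ (decide (ŷ ≤ a) = false → y ≤ ŷ - ζ) := by
  by_cases hŷ : ŷ ≤ a
  · simp only [hŷ, decide_true, true_implies, Bool.true_eq_false, false_implies, and_true] at h ⊢
    linarith
  · simp only [hŷ, decide_false, Bool.false_eq_true, false_implies, true_implies, true_and]
      at h ⊢
    linarith

theorem stmt2_general {X : Type*} (ζ : ℝ)
    (C : Set (X → ℝ))
    (k : ℕ) (htree : HasSfatTree C ζ k)
    (L : List (X × Bool) → X → ℝ) :
    ∃ (x : ℕ → X) (s : ℕ → Bool), ∃ c ∈ C, ∀ t < k,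
      (s t = true →
        L ((List.range t).map fun j => (x j, s j)) (x t) + ζ ≤ c (x t)) ∧
      (s t = false →
        c (x t) ≤ L ((List.range t).map fun j => (x j, s j)) (x t) - ζ) := by
  obtain ⟨pt, th, -, hshatter⟩ := htree
  let move := sfatAdversary L pt th
  let play := transcript move
  obtain ⟨c, hc, hcv⟩ := hshatter fun i => (move (play i)).2
  refine ⟨fun j => (move (play j)).1, fun j => (move (play j)).2, c, hc, fun t ht => ?_⟩
  have hplay : ((List.range t).map fun j => ((move (play j)).1, (move (play j)).2)) = play t :=
    (transcript_eq_map_range move t).symm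
  have hbranch : (List.ofFn fun i : Fin k => (move (play i)).2).take t = (play t).map Prod.snd := by
    rw [List.take_ofFn_eq_map_range (fun j => (move (play j)).2) ht.le, ← hplay, List.map_map]
    rfl
  have hct := hcv ⟨t, ht⟩
  rw [hbranch] at hct
  rw [hplay]
  exact margin_of_threshold_margin hct

/-- if `C` admits a `ζ`-sequential fat-shattering tree of depth
`k`, then every deterministic online learner `L` with binary feedback alphabet
can be forced, by an adversary providing only binary directional feedback, to
make a `ζ`-mistake on each of `k` consecutive rounds: there are points
`x₁,…,x_k`, feedback bits `s₁,…,s_k`, and a concept `c ∈ C` such that, on each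
round `t`, `c (x t) ≥ ŷ_t + ζ` if `s t = 1` and `c (x t) ≤ ŷ_t - ζ` if
`s t = 0`, where `ŷ_t` is the learner's prediction. -/
theorem stmt2 {X : Type*} (ζ : ℝ) (hζ : 0 < ζ)
    (C : Set (X → ℝ)) (hC : ∀ f ∈ C, ∀ x : X, f x ∈ Set.Icc (0 : ℝ) 1)
    (k : ℕ) (htree : HasSfatTree C ζ k)
    (L : List (X × Bool) → X → ℝ) (hL : ∀ h x, L h x ∈ Set.Icc (0 : ℝ) 1) :
    ∃ (x : ℕ → X) (s : ℕ → Bool), ∃ c ∈ C, ∀ t < k,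
      (s t = true →
        L ((List.range t).map fun j => (x j, s j)) (x t) + ζ ≤ c (x t)) ∧
      (s t = false →
        c (x t) ≤ L ((List.range t).map fun j => (x j, s j)) (x t) - ζ) :=
  stmt2_general ζ C k htree L
end

section
/- Let ζ ∈ (0,1), let d ≥ 1 and m ≥ 1 be integers, let (X,Σ) be a measurable space, let D be a probability measure on X, let c : X → [0,1] be a target function, and let ĉ : X → [0,1] be a measurable function with |ĉ(x) − c(x)| ≤ ζ for all x ∈ X. Let (W,ν) be a probability space and let A : W × X^m → {functions X → [0,1]} be a map whose output is always ζ-consistent with its input sample, i.e. |A(w,(x_1,…,x_m))(x_i) − ĉ(x_i)| ≤ ζ for every w ∈ W, every (x_1,…,x_m) ∈ X^m, and every i ∈ [m]. Suppose that for some function f : X → [0,1] the event {(w, x⃗) : |A(w,x⃗)(x) − f(x)| < 5ζ for every x ∈ X} is measurable and has probability at least ζ^d under ν ⊗ D^m. Then D({x ∈ X : |f(x) − ĉ(x)| > 6ζ}) ≤ d·ln(1/ζ)/m. -/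
open MeasureTheory

lemma key_pi_bound {X : Type*} [MeasurableSpace X] (D : Measure X)
    [IsProbabilityMeasure D] (B : Set X) :
    ∀ n (F : Set (Fin n → X)), MeasurableSet F → (∀ xs ∈ F, ∀ i, xs i ∉ B) →
      Measure.pi (fun _ : Fin n => D) F ≤ (1 - D B) ^ n := by
  intro n
  induction n with
  | zero =>
    intro F _ _
    simpa using prob_le_one (μ := Measure.pi (fun _ : Fin 0 => D)) (s := F)
  | succ n ih =>
    intro F hF hFB
    set e := MeasurableEquiv.piFinSuccAbove (fun _ : Fin (n + 1) => X) 0 with he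
    have hmp := measurePreserving_piFinSuccAbove (fun _ : Fin (n + 1) => D) 0
    have hmp' : MeasurePreserving e.symm
        (D.prod (Measure.pi fun _ : Fin n => D)) (Measure.pi fun _ : Fin (n + 1) => D) :=
      MeasurePreserving.symm e hmp
    have h1 : Measure.pi (fun _ : Fin (n + 1) => D) F
        = (D.prod (Measure.pi fun _ : Fin n => D)) (e.symm ⁻¹' F) :=
      (hmp'.measure_preimage hF.nullMeasurableSet).symm
    have hFpre : MeasurableSet (e.symm ⁻¹' F) := hF.preimage e.symm.measurable
    rw [h1, Measure.prod_apply hFpre]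
    -- the section function
    set g : X → ENNReal :=
      fun x => (Measure.pi fun _ : Fin n => D) (Prod.mk x ⁻¹' (e.symm ⁻¹' F)) with hg
    have hsymm : ∀ (x : X) (ys : Fin n → X), e.symm (x, ys) = Fin.insertNth 0 x ys := by
      intro x ys
      rfl
    have hmem : ∀ (x : X) (ys : Fin n → X),
        ys ∈ Prod.mk x ⁻¹' (e.symm ⁻¹' F) ↔ Fin.insertNth 0 x ys ∈ F := by
      intro x ys
      simp [Set.mem_preimage, hsymm]
    have hgmeas : Measurable g := measurable_measure_prodMk_left hFpre
    have hgB : ∀ x ∈ B, g x = 0 := by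
      intro x hx
      have : Prod.mk x ⁻¹' (e.symm ⁻¹' F) = ∅ := by
        ext ys
        simp only [Set.mem_empty_iff_false, iff_false]
        intro hmem'
        have hin : Fin.insertNth 0 x ys ∈ F := (hmem x ys).mp hmem'
        have := hFB _ hin 0
        rw [Fin.insertNth_apply_same] at this
        exact this hx
      rw [hg]
      simp [this]
    have hgle : ∀ x, g x ≤ (1 - D B) ^ n := by
      intro x
      refine ih _ (measurable_prodMk_left hFpre) ?_
      intro ys hys j
      have hin : Fin.insertNth 0 x ys ∈ F := (hmem x ys).mp hys
      have := hFB _ hin (Fin.succAbove 0 j)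
      rwa [Fin.insertNth_apply_succAbove] at this
    set G : Set X := {x | g x ≠ 0} with hG
    have hGmeas : MeasurableSet G := (hgmeas (measurableSet_singleton 0)).compl
    have hBG : B ⊆ Gᶜ := by
      intro x hx
      simp only [hG, Set.mem_compl_iff, Set.mem_setOf_eq, not_not]
      exact hgB x hx
    have hDG : D G ≤ 1 - D B := by
      refine ENNReal.le_sub_of_add_le_left (measure_ne_top D B) ?_
      calc D B + D G ≤ D Gᶜ + D G := by
            gcongr <;> exact measure_mono hBG
        _ = D G + D Gᶜ := add_comm _ _
        _ = 1 := prob_add_prob_compl hGmeas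
    have hptwise : ∀ x, g x ≤ G.indicator (fun _ => (1 - D B) ^ n) x := by
      intro x
      by_cases hx : g x = 0
      · simp [hx]
      · have : x ∈ G := hx
        rw [Set.indicator_of_mem this]
        exact hgle x
    calc ∫⁻ x, g x ∂D ≤ ∫⁻ x, G.indicator (fun _ => (1 - D B) ^ n) x ∂D :=
          lintegral_mono hptwise
      _ = (1 - D B) ^ n * D G := lintegral_indicator_const hGmeas _
      _ ≤ (1 - D B) ^ n * (1 - D B) := by gcongr
      _ = (1 - D B) ^ (n + 1) := (pow_succ _ _).symm

/-- generalization lemma: if a learner `A` is always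
`ζ`-consistent with its training labels `chat`, and with probability at least
`ζ^d` (over the internal randomness `w ∼ ν` and an i.i.d. sample `x⃗ ∼ D^m`)
its output lies in the pointwise `5ζ`-ball of a function `f`, then
`D {x : |f x - chat x| > 6ζ} ≤ d·ln(1/ζ)/m`. -/
theorem stmt3 {X : Type*} [MeasurableSpace X]
    (ζ : ℝ) (hζ : 0 < ζ ∧ ζ < 1) (d m : ℕ) (hd : 1 ≤ d) (hm : 1 ≤ m)
    (D : Measure X) [IsProbabilityMeasure D]
    (c chat : X → ℝ) (hc : ∀ x, c x ∈ Set.Icc (0 : ℝ) 1)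
    (hchatmeas : Measurable chat)
    (hchat : ∀ x, chat x ∈ Set.Icc (0 : ℝ) 1 ∧ |chat x - c x| ≤ ζ)
    {W : Type*} [MeasurableSpace W] (ν : Measure W) [IsProbabilityMeasure ν]
    (A : W → (Fin m → X) → (X → ℝ))
    (hArange : ∀ w xs x, A w xs x ∈ Set.Icc (0 : ℝ) 1)
    (hAcons : ∀ w xs (i : Fin m), |A w xs (xs i) - chat (xs i)| ≤ ζ)
    (f : X → ℝ) (hf : ∀ x, f x ∈ Set.Icc (0 : ℝ) 1)
    (hmeas : MeasurableSet
      {p : W × (Fin m → X) | ∀ x, |A p.1 p.2 x - f x| < 5 * ζ})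
    (hprob : ENNReal.ofReal (ζ ^ d) ≤
      (ν.prod (Measure.pi fun _ : Fin m => D))
        {p : W × (Fin m → X) | ∀ x, |A p.1 p.2 x - f x| < 5 * ζ}) :
    D {x | 6 * ζ < |f x - chat x|} ≤
      ENNReal.ofReal ((d : ℝ) * Real.log (1 / ζ) / (m : ℝ)) := by
  obtain ⟨hζ0, hζ1⟩ := hζ
  set B : Set X := {x | 6 * ζ < |f x - chat x|} with hB
  set E : Set (W × (Fin m → X)) := {p | ∀ x, |A p.1 p.2 x - f x| < 5 * ζ} with hE
  -- on E, all sample points avoid B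
  have hEB : ∀ p ∈ E, ∀ i : Fin m, p.2 i ∉ B := by
    intro p hp i hmemB
    have h1 : |A p.1 p.2 (p.2 i) - f (p.2 i)| < 5 * ζ := hp (p.2 i)
    have h2 : |A p.1 p.2 (p.2 i) - chat (p.2 i)| ≤ ζ := hAcons p.1 p.2 i
    have h3 : 6 * ζ < |f (p.2 i) - chat (p.2 i)| := hmemB
    have h4 : |f (p.2 i) - chat (p.2 i)| ≤
        |A p.1 p.2 (p.2 i) - f (p.2 i)| + |A p.1 p.2 (p.2 i) - chat (p.2 i)| := by
      have := abs_sub (A p.1 p.2 (p.2 i) - f (p.2 i)) (A p.1 p.2 (p.2 i) - chat (p.2 i))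
      calc |f (p.2 i) - chat (p.2 i)|
          = |(A p.1 p.2 (p.2 i) - chat (p.2 i)) - (A p.1 p.2 (p.2 i) - f (p.2 i))| := by
            ring_nf
        _ ≤ |A p.1 p.2 (p.2 i) - chat (p.2 i)| + |A p.1 p.2 (p.2 i) - f (p.2 i)| :=
            abs_sub _ _
        _ = |A p.1 p.2 (p.2 i) - f (p.2 i)| + |A p.1 p.2 (p.2 i) - chat (p.2 i)| :=
            add_comm _ _
    linarith
  -- bound the measure of E
  have hEbound : (ν.prod (Measure.pi fun _ : Fin m => D)) E ≤ (1 - D B) ^ m := by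
    rw [Measure.prod_apply hmeas]
    have hsec : ∀ w : W, (Measure.pi fun _ : Fin m => D) (Prod.mk w ⁻¹' E)
        ≤ (1 - D B) ^ m := by
      intro w
      refine key_pi_bound D B m _ (measurable_prodMk_left hmeas) ?_
      intro xs hxs i
      exact hEB (w, xs) hxs i
    calc ∫⁻ w, (Measure.pi fun _ : Fin m => D) (Prod.mk w ⁻¹' E) ∂ν
        ≤ ∫⁻ _, (1 - D B) ^ m ∂ν := lintegral_mono hsec
      _ = (1 - D B) ^ m := by simp
  have hchain : ENNReal.ofReal (ζ ^ d) ≤ (1 - D B) ^ m := le_trans hprob hEbound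
  -- real arithmetic
  set q : ℝ := (D B).toReal with hq
  have hDBne : D B ≠ ⊤ := measure_ne_top D B
  have hq0 : 0 ≤ q := ENNReal.toReal_nonneg
  have hq1 : q ≤ 1 := by
    have h := ENNReal.toReal_mono (by simp : (1 : ENNReal) ≠ ⊤) (prob_le_one (μ := D) (s := B))
    simpa using h
  have hsub : (1 : ENNReal) - D B = ENNReal.ofReal (1 - q) := by
    rw [ENNReal.ofReal_sub _ hq0, ENNReal.ofReal_one, ENNReal.ofReal_toReal hDBne]
  have hpow : ((1 : ENNReal) - D B) ^ m = ENNReal.ofReal ((1 - q) ^ m) := by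
    rw [hsub, ENNReal.ofReal_pow (by linarith)]
  rw [hpow] at hchain
  have hreal : ζ ^ d ≤ (1 - q) ^ m :=
    (ENNReal.ofReal_le_ofReal_iff (pow_nonneg (by linarith) m)).mp hchain
  have hζd : 0 < ζ ^ d := pow_pos hζ0 d
  have h1q : 0 < 1 - q := by
    rcases lt_or_eq_of_le (by linarith : (0 : ℝ) ≤ 1 - q) with h | h
    · exact h
    · exfalso
      rw [← h] at hreal
      rw [zero_pow (by omega : m ≠ 0)] at hreal
      linarith
  have hlog : (d : ℝ) * Real.log ζ ≤ (m : ℝ) * Real.log (1 - q) := by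
    have := Real.log_le_log (by positivity) hreal
    rwa [Real.log_pow, Real.log_pow] at this
  have hlog2 : Real.log (1 - q) ≤ -q := by
    have := Real.log_le_sub_one_of_pos h1q
    linarith
  have hm0 : (0 : ℝ) < m := by exact_mod_cast hm
  have hloginv : Real.log (1 / ζ) = -Real.log ζ := by
    rw [one_div, Real.log_inv]
  have hqle : q ≤ (d : ℝ) * Real.log (1 / ζ) / (m : ℝ) := by
    rw [hloginv, le_div_iff₀ hm0]
    nlinarith [hlog, hlog2, hm0]
  calc D B = ENNReal.ofReal q := (ENNReal.ofReal_toReal hDBne).symm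
    _ ≤ ENNReal.ofReal ((d : ℝ) * Real.log (1 / ζ) / (m : ℝ)) :=
      ENNReal.ofReal_le_ofReal hqle
end

section
/- Let ε ∈ (0,1) be such that 5/(2ε) is a positive integer, let X be a set, and let C be a class of functions from X to [0,1] with sfat_{2ε/5}(C) = d finite. Then there exists a deterministic online learner L over domain X with feedback alphabet [0,1] ∪ {⊥} such that: for every target concept c ∈ C, every T ∈ ℕ, every sequence of points x_1,…,x_T ∈ X, and every feedback sequence a_1,…,a_T ∈ [0,1] ∪ {⊥} satisfying, for each t ∈ [T] with ŷ_t := L((x_1,a_1),…,(x_{t−1},a_{t−1}); x_t): if |ŷ_t − c(x_t)| > ε then a_t ∈ [0,1] with |a_t − c(x_t)| < ε/10, and if |ŷ_t − c(x_t)| ≤ ε then a_t = ⊥ — the number of rounds t ∈ [T] with |ŷ_t − c(x_t)| > ε is at most d. That is, in the online model in which the learner receives (ε/10)-accurate feedback only on the rounds where it makes an ε-mistake and no feedback otherwise, C can be online learned with at most sfat_{2ε/5}(C) mistakes. -/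
open MeasureTheory

namespace Stmt14

variable {X : Type*}

theorem tree_mono_class {C1 C2 : Set (X → ℝ)} (h : C1 ⊆ C2) {δ : ℝ} {k : ℕ}
    (ht : HasSfatTree C1 δ k) : HasSfatTree C2 δ k := by
  obtain ⟨pt, th, h1, h2⟩ := ht
  refine ⟨pt, th, h1, fun v => ?_⟩
  obtain ⟨f, hf, hp⟩ := h2 v
  exact ⟨f, h hf, hp⟩

theorem tree_succ {C : Set (X → ℝ)} {δ : ℝ} {k : ℕ}
    (ht : HasSfatTree C δ (k + 1)) : HasSfatTree C δ k := by
  obtain ⟨pt, th, h1, h2⟩ := ht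
  refine ⟨pt, th, fun w hw => h1 w (by omega), fun v => ?_⟩
  obtain ⟨f, hfC, hf⟩ := h2 (fun i => if h : i.1 < k then v ⟨i.1, h⟩ else false)
  refine ⟨f, hfC, fun i => ?_⟩
  have hi : i.1 < k + 1 := Nat.lt_succ_of_lt i.2
  have htake :
      (List.ofFn (fun i : Fin (k+1) => if h : i.1 < k then v ⟨i.1, h⟩ else false)).take i.1
        = (List.ofFn v).take i.1 := by
    apply List.ext_getElem
    · simp only [List.length_take, List.length_ofFn]; omega
    · intro j hj1 hj2
      have hjk : j < k := by
        simp only [List.length_take, List.length_ofFn] at hj2; omega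
      rw [List.getElem_take, List.getElem_take, List.getElem_ofFn, List.getElem_ofFn]
      simp [hjk]
  have h3 := hf ⟨i.1, hi⟩
  rw [htake] at h3
  exact ⟨fun hv => h3.1 (by simp [i.2, hv]), fun hv => h3.2 (by simp [i.2, hv])⟩

theorem tree_mono_depth {C : Set (X → ℝ)} {δ : ℝ} {j k : ℕ} (hjk : j ≤ k)
    (ht : HasSfatTree C δ k) : HasSfatTree C δ j := by
  induction k with
  | zero => rw [Nat.le_zero.mp hjk]; exact ht
  | succ n ih =>
    rcases eq_or_lt_of_le hjk with rfl | h
    · exact ht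
    · exact ih (by omega) (tree_succ ht)

theorem not_tree_empty {δ : ℝ} {k : ℕ} : ¬ HasSfatTree (∅ : Set (X → ℝ)) δ k := by
  rintro ⟨pt, th, -, h⟩
  obtain ⟨f, hf, -⟩ := h (fun _ => true)
  exact hf

theorem tree_zero {C : Set (X → ℝ)} {δ : ℝ} (x : X) {f : X → ℝ} (hf : f ∈ C) :
    HasSfatTree C δ 0 :=
  ⟨fun _ => x, fun _ => 0, fun w hw => absurd hw (by omega),
    fun _ => ⟨f, hf, fun i => i.elim0⟩⟩

noncomputable def sfatN (C : Set (X → ℝ)) (δ : ℝ) : ℕ := sSup {k | HasSfatTree C δ k}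

theorem sfat_le {C : Set (X → ℝ)} {δ : ℝ} {d : ℕ} (h : ¬ HasSfatTree C δ (d + 1)) :
    sfatN C δ ≤ d := by
  apply csSup_le'
  intro k hk
  by_contra hkd
  exact h (tree_mono_depth (by omega) hk)

theorem bdd {C : Set (X → ℝ)} {δ : ℝ} {d : ℕ} (h : ¬ HasSfatTree C δ (d + 1)) :
    BddAbove {k | HasSfatTree C δ k} :=
  ⟨d, fun k hk => by by_contra hkd; exact h (tree_mono_depth (by omega) hk)⟩

theorem sfat_ge {C : Set (X → ℝ)} {δ : ℝ} {d k : ℕ} (hb : ¬ HasSfatTree C δ (d + 1))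
    (h : HasSfatTree C δ k) : k ≤ sfatN C δ := le_csSup (bdd hb) h

theorem sfat_lt {V' : Set (X → ℝ)} {δ : ℝ} {k : ℕ} (hk : k ≠ 0)
    (h : ¬ HasSfatTree V' δ k) : sfatN V' δ < k := by
  have : sfatN V' δ ≤ k - 1 := csSup_le' fun j hj => by
    by_contra hjk; exact h (tree_mono_depth (by omega) hj)
  omega

theorem tree_combine {V : Set (X → ℝ)} {δ : ℝ} {x : X} {a : ℝ}
    (ha : a ∈ Set.Icc (0 : ℝ) 1) {k : ℕ}
    (h1 : HasSfatTree {f ∈ V | a + δ ≤ f x} δ k)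
    (h0 : HasSfatTree {f ∈ V | f x ≤ a - δ} δ k) :
    HasSfatTree V δ (k + 1) := by
  obtain ⟨p1, t1, ht1, hs1⟩ := h1
  obtain ⟨p0, t0, ht0, hs0⟩ := h0
  refine ⟨fun w => match w with | [] => x | b :: w' => if b then p1 w' else p0 w',
          fun w => match w with | [] => a | b :: w' => if b then t1 w' else t0 w', ?_, ?_⟩
  · intro w hw
    match w with
    | [] => exact ha
    | b :: w' =>
      simp only [List.length_cons] at hw
      cases b
      · simpa using ht0 w' (by omega)
      · simpa using ht1 w' (by omega)
  · intro v
    cases hb : v 0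
    case false =>
      obtain ⟨f, hfm, hf⟩ := hs0 (fun i => v i.succ)
      refine ⟨f, hfm.1, fun i => ?_⟩
      refine Fin.cases ?_ ?_ i
      · refine ⟨fun h => absurd (hb ▸ h) (by simp), fun _ => ?_⟩
        simpa using hfm.2
      · intro j
        have hnode : (List.ofFn v).take ((j.succ : Fin (k+1)).1)
            = false :: (List.ofFn (fun i => v i.succ)).take j.1 := by
          rw [List.ofFn_succ, hb]; rfl
        rw [hnode]
        exact hf j
    case true =>
      obtain ⟨f, hfm, hf⟩ := hs1 (fun i => v i.succ)
      refine ⟨f, hfm.1, fun i => ?_⟩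
      refine Fin.cases ?_ ?_ i
      · refine ⟨fun _ => ?_, fun h => absurd (hb ▸ h) (by simp)⟩
        simpa using hfm.2
      · intro j
        have hnode : (List.ofFn v).take ((j.succ : Fin (k+1)).1)
            = true :: (List.ofFn (fun i => v i.succ)).take j.1 := by
          rw [List.ofFn_succ, hb]; rfl
        rw [hnode]
        exact hf j

end Stmt14

namespace Stmt14

variable {X : Type*}

open scoped Classical in
noncomputable def Aset (ε : ℝ) (m : ℕ) (V : Set (X → ℝ)) (x : X) : Finset ℕ :=
  (Finset.range (m + 1)).filter fun j =>
    HasSfatTree {f ∈ V | ((j : ℝ) + 1) * (2 * ε / 5) ≤ f x} (2 * ε / 5) (sfatN V (2 * ε / 5))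

noncomputable def bestIdx (ε : ℝ) (m : ℕ) (V : Set (X → ℝ)) (x : X) : ℕ :=
  if h : (Aset ε m V x).Nonempty then (Aset ε m V x).max' h + 1 else 0

noncomputable def predict (ε : ℝ) (m : ℕ) (V : Set (X → ℝ)) (x : X) : ℝ :=
  (bestIdx ε m V x : ℝ) * (2 * ε / 5)

theorem mem_Aset_lt {ε : ℝ} (hε : 0 < ε) {m : ℕ} (hmδ : (m : ℝ) * (2 * ε / 5) = 1)
    {C V : Set (X → ℝ)} (hC : ∀ f ∈ C, ∀ y : X, f y ∈ Set.Icc (0 : ℝ) 1) (hV : V ⊆ C)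
    {x : X} {j : ℕ} (hj : j ∈ Aset ε m V x) : j < m := by
  simp only [Aset, Finset.mem_filter, Finset.mem_range] at hj
  obtain ⟨hjm, hP⟩ := hj
  rcases Nat.lt_or_ge j m with h | h
  · exact h
  exfalso
  have hjm' : j = m := by omega
  subst hjm'
  have hempty : {f ∈ V | ((j : ℝ) + 1) * (2 * ε / 5) ≤ f x} = ∅ := by
    ext f
    simp only [Set.mem_setOf_eq, Set.mem_empty_iff_false, iff_false, not_and, not_le]
    intro hfV
    have h1 := (hC f (hV hfV) x).2
    have h2 : ((j : ℝ) + 1) * (2 * ε / 5) = 1 + 2 * ε / 5 := by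
      rw [add_mul, hmδ, one_mul]
    linarith
  rw [hempty] at hP
  exact not_tree_empty hP

theorem bestIdx_spec {ε : ℝ} (hε : 0 < ε) {m : ℕ} (hmδ : (m : ℝ) * (2 * ε / 5) = 1)
    {C V : Set (X → ℝ)} (hC : ∀ f ∈ C, ∀ y : X, f y ∈ Set.Icc (0 : ℝ) 1) (hV : V ⊆ C)
    {x : X} : bestIdx ε m V x ≤ m ∧ bestIdx ε m V x ∉ Aset ε m V x := by
  unfold bestIdx
  split_ifs with h
  · constructor
    · have := mem_Aset_lt hε hmδ hC hV (Finset.max'_mem _ h)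
      omega
    · intro hmem
      have := Finset.le_max' _ _ hmem
      omega
  · exact ⟨by omega, fun hmem => h ⟨_, hmem⟩⟩

theorem predict_mem {ε : ℝ} (hε : 0 < ε) {m : ℕ} (hmδ : (m : ℝ) * (2 * ε / 5) = 1)
    {C V : Set (X → ℝ)} (hC : ∀ f ∈ C, ∀ y : X, f y ∈ Set.Icc (0 : ℝ) 1) (hV : V ⊆ C)
    (x : X) : predict ε m V x ∈ Set.Icc (0 : ℝ) 1 := by
  have hb := (bestIdx_spec hε hmδ hC hV (x := x)).1
  unfold predict
  constructor
  · positivity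
  · have h1 : (bestIdx ε m V x : ℝ) ≤ (m : ℝ) := Nat.cast_le.mpr hb
    calc (bestIdx ε m V x : ℝ) * (2 * ε / 5) ≤ (m : ℝ) * (2 * ε / 5) := by
          apply mul_le_mul_of_nonneg_right h1; positivity
      _ = 1 := hmδ

theorem core {ε : ℝ} (hε : 0 < ε) {m : ℕ} (hmδ : (m : ℝ) * (2 * ε / 5) = 1)
    {C V : Set (X → ℝ)} (hC : ∀ f ∈ C, ∀ y : X, f y ∈ Set.Icc (0 : ℝ) 1) (hV : V ⊆ C)
    {d : ℕ} (hnd : ¬ HasSfatTree C (2 * ε / 5) (d + 1))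
    {c : X → ℝ} (hc : c ∈ V) (x : X) {r : ℝ} (hr : |r - c x| < ε / 10)
    (hmis : ε < |predict ε m V x - c x|) :
    sfatN {f ∈ V | |f x - r| ≤ ε / 10} (2 * ε / 5) < sfatN V (2 * ε / 5) := by
  have hnV : ¬ HasSfatTree V (2 * ε / 5) (d + 1) := fun h => hnd (tree_mono_class hV h)
  obtain ⟨hb_le, hb_nmem⟩ := bestIdx_spec hε hmδ hC hV (x := x)
  have hrr := abs_lt.mp hr
  have hcx := hC c (hV hc) x
  have hyh : predict ε m V x = (bestIdx ε m V x : ℝ) * (2 * ε / 5) := rfl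
  have notPb : ¬ HasSfatTree
      {f ∈ V | ((bestIdx ε m V x : ℝ) + 1) * (2 * ε / 5) ≤ f x} (2 * ε / 5)
      (sfatN V (2 * ε / 5)) := by
    intro hP
    apply hb_nmem
    simp only [Aset, Finset.mem_filter, Finset.mem_range]
    exact ⟨by omega, hP⟩
  rcases le_total (c x) (predict ε m V x) with hcle | hcge
  · -- downward mistake: c x < predict - ε
    have hdown : ε < predict ε m V x - c x := by
      have := abs_of_nonneg (by linarith : (0:ℝ) ≤ predict ε m V x - c x)
      rw [this] at hmis; exact hmis
    have hAne : (Aset ε m V x).Nonempty := by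
      by_contra h
      have hb0 : bestIdx ε m V x = 0 := by unfold bestIdx; rw [dif_neg h]
      rw [hyh, hb0] at hdown
      push_cast at hdown
      linarith [hcx.1]
    have hbj : bestIdx ε m V x = (Aset ε m V x).max' hAne + 1 := by
      unfold bestIdx; rw [dif_pos hAne]
    have hPj : HasSfatTree
        {f ∈ V | (((Aset ε m V x).max' hAne : ℝ) + 1) * (2 * ε / 5) ≤ f x} (2 * ε / 5)
        (sfatN V (2 * ε / 5)) := by
      have := Finset.max'_mem _ hAne
      simp only [Aset, Finset.mem_filter] at this
      exact this.2
    have hjm : (Aset ε m V x).max' hAne < m :=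
      mem_Aset_lt hε hmδ hC hV (Finset.max'_mem _ hAne)
    set a : ℝ := ((Aset ε m V x).max' hAne : ℝ) * (2 * ε / 5) with hadef
    have hPj' : HasSfatTree {f ∈ V | a + 2 * ε / 5 ≤ f x} (2 * ε / 5)
        (sfatN V (2 * ε / 5)) := by
      have he : (((Aset ε m V x).max' hAne : ℝ) + 1) * (2 * ε / 5) = a + 2 * ε / 5 := by
        rw [hadef]; ring
      rw [he] at hPj; exact hPj
    have hpred : predict ε m V x = a + 2 * ε / 5 := by
      rw [hyh, hbj, hadef]; push_cast; ring
    have ha : a ∈ Set.Icc (0 : ℝ) 1 := by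
      constructor
      · rw [hadef]; positivity
      · have h1 : ((Aset ε m V x).max' hAne : ℝ) + 1 ≤ (m : ℝ) := by
          exact_mod_cast hjm
        have h2 : ((Aset ε m V x).max' hAne : ℝ) * (2 * ε / 5) ≤
            ((m : ℝ) - 1) * (2 * ε / 5) := by
          apply mul_le_mul_of_nonneg_right (by linarith); positivity
        rw [hadef]
        nlinarith
    have notPm : ¬ HasSfatTree {f ∈ V | f x ≤ a - 2 * ε / 5} (2 * ε / 5)
        (sfatN V (2 * ε / 5)) := by
      intro h
      have h2 := tree_combine ha hPj' h
      have h3 := sfat_ge hnV h2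
      omega
    have hcmem : c ∈ {f ∈ V | f x ≤ a - 2 * ε / 5} := ⟨hc, by linarith⟩
    have hk0 : sfatN V (2 * ε / 5) ≠ 0 := by
      intro h0
      rw [h0] at notPm
      exact notPm (tree_zero x hcmem)
    have hsub : {f ∈ V | |f x - r| ≤ ε / 10} ⊆ {f ∈ V | f x ≤ a - 2 * ε / 5} := by
      rintro f ⟨hfV, hfr⟩
      have h4 := abs_le.mp hfr
      exact ⟨hfV, by linarith⟩
    exact sfat_lt hk0 fun h => notPm (tree_mono_class hsub h)
  · -- upward mistake: c x > predict + ε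
    have hup : ε < c x - predict ε m V x := by
      have := abs_of_nonpos (by linarith : predict ε m V x - c x ≤ (0:ℝ))
      rw [this] at hmis; linarith
    have hexp : ((bestIdx ε m V x : ℝ) + 1) * (2 * ε / 5)
        = (bestIdx ε m V x : ℝ) * (2 * ε / 5) + 2 * ε / 5 := by ring
    have hcmem : c ∈ {f ∈ V | ((bestIdx ε m V x : ℝ) + 1) * (2 * ε / 5) ≤ f x} := by
      refine ⟨hc, ?_⟩
      rw [hexp, ← hyh]
      linarith
    have hk0 : sfatN V (2 * ε / 5) ≠ 0 := by
      intro h0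
      rw [h0] at notPb
      exact notPb (tree_zero x hcmem)
    have hsub : {f ∈ V | |f x - r| ≤ ε / 10} ⊆
        {f ∈ V | ((bestIdx ε m V x : ℝ) + 1) * (2 * ε / 5) ≤ f x} := by
      rintro f ⟨hfV, hfr⟩
      have h4 := abs_le.mp hfr
      refine ⟨hfV, ?_⟩
      rw [hexp, ← hyh]
      linarith
    exact sfat_lt hk0 fun h => notPb (tree_mono_class hsub h)

def VS (ε : ℝ) (C : Set (X → ℝ)) (hist : List (X × Option ℝ)) : Set (X → ℝ) :=
  {f ∈ C | ∀ p ∈ hist, ∀ r : ℝ, p.2 = some r → |f p.1 - r| ≤ ε / 10}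

theorem VS_subset (ε : ℝ) (C : Set (X → ℝ)) (hist : List (X × Option ℝ)) :
    VS ε C hist ⊆ C := fun _ hf => hf.1

theorem VS_append_none (ε : ℝ) (C : Set (X → ℝ)) (h : List (X × Option ℝ)) (y : X) :
    VS ε C (h ++ [(y, none)]) = VS ε C h := by
  ext f
  simp only [VS, Set.mem_setOf_eq, List.mem_append, List.mem_singleton]
  constructor
  · rintro ⟨h1, h2⟩
    exact ⟨h1, fun p hp => h2 p (Or.inl hp)⟩
  · rintro ⟨h1, h2⟩
    refine ⟨h1, fun p hp r hpr => ?_⟩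
    rcases hp with hp | rfl
    · exact h2 p hp r hpr
    · simp at hpr
  
theorem VS_append_some (ε : ℝ) (C : Set (X → ℝ)) (h : List (X × Option ℝ)) (y : X) (r : ℝ) :
    VS ε C (h ++ [(y, some r)]) = {f ∈ VS ε C h | |f y - r| ≤ ε / 10} := by
  ext f
  simp only [VS, Set.mem_setOf_eq, List.mem_append, List.mem_singleton]
  constructor
  · rintro ⟨h1, h2⟩
    exact ⟨⟨h1, fun p hp => h2 p (Or.inl hp)⟩, h2 (y, some r) (Or.inr rfl) r rfl⟩
  · rintro ⟨⟨h1, h2⟩, h3⟩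
    refine ⟨h1, fun p hp r' hpr => ?_⟩
    rcases hp with hp | rfl
    · exact h2 p hp r' hpr
    · simp only at hpr
      cases hpr
      exact h3

end Stmt14

/-- in the online model where the learner receives
`(ε/10)`-accurate feedback only on rounds where it makes an `ε`-mistake (and
the "no feedback" symbol `⊥`, modeled by `none`, otherwise), any class `C`
with `sfat_{2ε/5}(C) = d` finite can be online learned by a deterministic
learner making at most `d` many `ε`-mistakes on any sequence of rounds. -/
theorem stmt14 {X : Type*} (ε : ℝ) (hε : 0 < ε ∧ ε < 1)
    (hεint : ∃ m : ℕ, 0 < m ∧ (m : ℝ) = 5 / (2 * ε))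
    (C : Set (X → ℝ)) (hC : ∀ f ∈ C, ∀ x : X, f x ∈ Set.Icc (0 : ℝ) 1)
    (d : ℕ)
    (hd : HasSfatTree C (2 * ε / 5) d ∧ ¬ HasSfatTree C (2 * ε / 5) (d + 1)) :
    ∃ L : List (X × Option ℝ) → X → ℝ,
      (∀ h x, L h x ∈ Set.Icc (0 : ℝ) 1) ∧
      ∀ c ∈ C, ∀ T : ℕ, ∀ x : ℕ → X, ∀ a : ℕ → Option ℝ,
        (∀ t < T,
          (ε < |L ((List.range t).map fun j => (x j, a j)) (x t) - c (x t)| →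
            ∃ r : ℝ, a t = some r ∧ r ∈ Set.Icc (0 : ℝ) 1 ∧
              |r - c (x t)| < ε / 10) ∧
          (|L ((List.range t).map fun j => (x j, a j)) (x t) - c (x t)| ≤ ε →
            a t = none)) →
        Nat.card {t : Fin T //
          ε < |L ((List.range t.1).map fun j => (x j, a j)) (x t.1) - c (x t.1)|} ≤ d := by
  classical
  obtain ⟨hε0, hε1⟩ := hε
  obtain ⟨m, hm0, hm⟩ := hεint
  have hmδ : (m : ℝ) * (2 * ε / 5) = 1 := by
    rw [hm]; field_simp
  obtain ⟨hdT, hnd⟩ := hd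
  refine ⟨fun hist y => Stmt14.predict ε m (Stmt14.VS ε C hist) y, ?_, ?_⟩
  · intro h y
    exact Stmt14.predict_mem hε0 hmδ hC (Stmt14.VS_subset ε C h) y
  · intro c hcC T x a H
    set V : ℕ → Set (X → ℝ) :=
      fun t => Stmt14.VS ε C ((List.range t).map fun j => (x j, a j)) with hVdef
    set M : ℕ → Prop :=
      fun t => ε < |Stmt14.predict ε m (V t) (x t) - c (x t)| with hMdef
    have hVsub : ∀ t, V t ⊆ C := fun t => Stmt14.VS_subset ε C _
    have hcV : ∀ t, t ≤ T → c ∈ V t := by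
      intro t ht
      refine ⟨hcC, ?_⟩
      intro p hp r hpr
      simp only [List.mem_map, List.mem_range] at hp
      obtain ⟨j, hj, rfl⟩ := hp
      replace hpr : a j = some r := hpr
      have hjT : j < T := by omega
      rcases le_or_gt |Stmt14.predict ε m (V j) (x j) - c (x j)| ε with hle | hgt
      · have hnone := (H j hjT).2 hle
        rw [hnone] at hpr
        cases hpr
      · obtain ⟨r', hr', _, hr'b⟩ := (H j hjT).1 hgt
        rw [hr'] at hpr
        cases hpr
        rw [abs_sub_comm]
        linarith
    have hstep : ∀ t, t < T →
        (M t → Stmt14.sfatN (V (t+1)) (2*ε/5) < Stmt14.sfatN (V t) (2*ε/5)) ∧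
        (¬ M t → V (t+1) = V t) := by
      intro t ht
      have hlist : (List.range (t+1)).map (fun j => (x j, a j))
          = ((List.range t).map fun j => (x j, a j)) ++ [(x t, a t)] := by
        rw [List.range_succ, List.map_append]
        rfl
      constructor
      · intro hMt
        obtain ⟨r, har, hrI, hrb⟩ := (H t ht).1 hMt
        have hVt1 : V (t+1) = {f ∈ V t | |f (x t) - r| ≤ ε/10} := by
          show Stmt14.VS ε C ((List.range (t+1)).map fun j => (x j, a j)) = _
          rw [hlist, har]
          exact Stmt14.VS_append_some ε C _ (x t) r
        rw [hVt1]
        exact Stmt14.core hε0 hmδ hC (hVsub t) hnd (hcV t (le_of_lt ht)) (x t) hrb hMt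
      · intro hMt
        have hnone := (H t ht).2 (not_lt.mp hMt)
        show Stmt14.VS ε C ((List.range (t+1)).map fun j => (x j, a j)) = V t
        rw [hlist, hnone]
        exact Stmt14.VS_append_none ε C _ (x t)
    have hcount : ∀ t, t ≤ T →
        ((Finset.range t).filter M).card + Stmt14.sfatN (V t) (2*ε/5)
          ≤ Stmt14.sfatN (V 0) (2*ε/5) := by
      intro t
      induction t with
      | zero => intro _; simp
      | succ n ih =>
        intro hT
        have hn := ih (by omega)
        rw [Finset.range_add_one, Finset.filter_insert]
        by_cases hMn : M n
        · rw [if_pos hMn, Finset.card_insert_of_notMem (by simp)]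
          have := (hstep n (by omega)).1 hMn
          omega
        · rw [if_neg hMn]
          have hEq := (hstep n (by omega)).2 hMn
          rw [hEq]
          exact hn
    have hd0 : Stmt14.sfatN (V 0) (2*ε/5) ≤ d :=
      Stmt14.sfat_le (fun h => hnd (Stmt14.tree_mono_class (hVsub 0) h))
    have e : {t : Fin T // M t.1} ≃ {u : ℕ // u ∈ (Finset.range T).filter M} :=
      { toFun := fun t => ⟨t.1.1, by
          simp only [Finset.mem_filter, Finset.mem_range]
          exact ⟨t.1.2, t.2⟩⟩
        invFun := fun u => ⟨⟨u.1, by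
          have hu := u.2
          simp only [Finset.mem_filter, Finset.mem_range] at hu
          exact hu.1⟩, by
          have hu := u.2
          simp only [Finset.mem_filter, Finset.mem_range] at hu
          exact hu.2⟩
        left_inv := fun t => rfl
        right_inv := fun u => rfl }
    have hgoal : Nat.card {t : Fin T // M t.1} ≤ d := by
      rw [Nat.card_congr e, Nat.card_eq_finsetCard]
      have := hcount T le_rfl
      omega
    simp only [hMdef, hVdef] at hgoal
    exact hgoal
end
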